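/- arXiv:math/9809143 — 5 statements merged into one kernel-verified Lean document; each statement's English description precedes it below -/
import Mathlib

section
/- For every integer n with |n| ≥ 2 and every element x of the free group F(a,b), the reduced (normal form) word representing x*(a*b)^n*x⁻¹ contains the string 'abab' or the string 'baba' (when n ≥ 2), or their inverse strings 'b⁻¹a⁻¹b⁻¹a⁻¹' or 'a⁻¹b⁻¹a⁻¹b⁻¹' (when n ≤ -2), as a contiguous substring. -/
noncomputable def a : FreeGroup Bool := FreeGroup.of false
noncomputable def b : FreeGroup Bool := FreeGroup.of true

/-- Letters of reduced words: `(false, true)` is `a`, `(false, false)` is `a⁻¹`,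
`(true, true)` is `b`, `(true, false)` is `b⁻¹`. -/
def strABAB : List (Bool × Bool) := [(false, true), (true, true), (false, true), (true, true)]
def strBABA : List (Bool × Bool) := [(true, true), (false, true), (true, true), (false, true)]
def strBiAiBiAi : List (Bool × Bool) :=
  [(true, false), (false, false), (true, false), (false, false)]
def strAiBiAiBi : List (Bool × Bool) :=
  [(false, false), (true, false), (false, false), (true, false)]

/-!
Peel the reduced word of the conjugator off one letter `ℓ` at a time, from the right. If `ℓ`
cancels against the first letter of the alternating word `(xᵉ yᵉ)ᵐ`, or `ℓ⁻¹` against its last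
letter, conjugating by `ℓ` merely rotates it into `(yᵉ xᵉ)ᵐ`; otherwise nothing cancels at all,
and the reduced word of `g (xᵉ yᵉ)ᵐ g⁻¹` is the plain concatenation of the three words. Either
way an alternating word of length `2m ≥ 4` survives as a subword.
-/

namespace FreeGroup

variable {α : Type*}

theorem IsReduced.invRev [DecidableEq α] {L : List (α × Bool)} (h : IsReduced L) :
    IsReduced (invRev L) := by
  rw [isReduced_iff_reduce_eq, reduce_invRev, h.reduce_eq]

theorem exists_infix_toWord_conj_of_forall_letter [DecidableEq α] {S : List (α × Bool) → Prop}
    (hS : ∀ w, S w → IsReduced w)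
    (hconj : ∀ w ℓ, S w → IsReduced ([ℓ] ++ w ++ invRev [ℓ]) ∨
      ∃ w', S w' ∧ mk ([ℓ] ++ w ++ invRev [ℓ]) = mk w')
    (g : FreeGroup α) {w : List (α × Bool)} (hw : S w) :
    ∃ w', S w' ∧ w' <:+: (g * mk w * g⁻¹).toWord := by
  suffices key : ∀ L, IsReduced L → ∀ w, S w →
      ∃ w', S w' ∧ w' <:+: (mk L * mk w * (mk L)⁻¹).toWord by
    simpa only [mk_toWord] using key g.toWord isReduced_toWord w hw
  intro L
  induction L using List.reverseRecOn with
  | nil =>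
    intro _ w hw
    refine ⟨w, hw, ?_⟩
    rw [← one_eq_mk, one_mul, inv_one, mul_one, toWord_mk, (hS w hw).reduce_eq]
  | append_singleton L ℓ ih =>
    intro hL w hw
    rcases hconj w ℓ hw with hred | ⟨w', hw', hmk⟩
    · have hhead : IsReduced (L ++ [ℓ] ++ (w ++ invRev [ℓ])) :=
        hL.append_overlap (by simpa only [List.append_assoc] using hred) (List.cons_ne_nil _ _)
      have hall : IsReduced (L ++ [ℓ] ++ w ++ invRev [ℓ] ++ invRev L) := by
        refine IsReduced.append_overlap (by simpa only [List.append_assoc] using hhead) ?_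
          (by simp [invRev])
        simpa only [invRev_append] using hL.invRev
      refine ⟨w, hw, L ++ [ℓ], invRev [ℓ] ++ invRev L, ?_⟩
      rw [inv_mk, mul_mk, mul_mk, toWord_mk, invRev_append, ← List.append_assoc, hall.reduce_eq]
    · have hL' : IsReduced L := hL.infix ⟨[], [ℓ], rfl⟩
      have hpeel : mk (L ++ [ℓ]) * mk w * (mk (L ++ [ℓ]))⁻¹ = mk L * mk w' * (mk L)⁻¹ := by
        simp only [← hmk, ← mul_mk, ← inv_mk]
        group
      rw [hpeel]
      exact ih hL' w' hw'

def alternatingWord (x y : α) (e : Bool) (m : ℕ) : List (α × Bool) :=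
  (List.replicate m [(x, e), (y, e)]).flatten

theorem mk_alternatingWord (x y : α) (e : Bool) (m : ℕ) :
    mk (alternatingWord x y e m) = mk [(x, e), (y, e)] ^ m :=
  (pow_mk m).symm

theorem alternatingWord_add (x y : α) (e : Bool) (m k : ℕ) :
    alternatingWord x y e (m + k) = alternatingWord x y e m ++ alternatingWord x y e k := by
  simp only [alternatingWord, List.replicate_add, List.flatten_append]

theorem alternatingWord_infix_of_le (x y : α) (e : Bool) {m k : ℕ} (h : m ≤ k) :
    alternatingWord x y e m <:+: alternatingWord x y e k := by
  obtain ⟨j, rfl⟩ := Nat.exists_eq_add_of_le h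
  rw [alternatingWord_add]
  exact List.infix_append [] _ _

theorem isCyclicallyReduced_pair (x y : α) (e : Bool) : IsCyclicallyReduced [(x, e), (y, e)] := by
  simp [isCyclicallyReduced_iff, IsReduced]

theorem isReduced_alternatingWord (x y : α) (e : Bool) (m : ℕ) :
    IsReduced (alternatingWord x y e m) :=
  ((isCyclicallyReduced_pair x y e).flatten_replicate m).isReduced

theorem isReduced_letter_alternatingWord_invRev {x y : α} {e : Bool} {m : ℕ} {ℓ : α × Bool}
    (hm : m ≠ 0) (hx : ℓ ≠ (x, !e)) (hy : ℓ ≠ (y, e)) :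
    IsReduced ([ℓ] ++ alternatingWord x y e m ++ invRev [ℓ]) := by
  refine IsReduced.append_flatten_replicate_append (isCyclicallyReduced_pair x y e) ?_ hm
  obtain ⟨z, f⟩ := ℓ
  simp only [ne_eq, Prod.mk.injEq] at hx hy
  simp only [invRev, IsReduced, List.cons_append, List.nil_append, List.map, List.reverse_singleton]
  cases e <;> cases f <;> simp_all [eq_comm]

theorem mk_pair (x y : α) (e : Bool) : mk [(x, e), (y, e)] = mk [(x, e)] * mk [(y, e)] := rfl

theorem mk_inv_head_conj_alternatingWord (x y : α) (e : Bool) (m : ℕ) :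
    mk ([(x, !e)] ++ alternatingWord x y e m ++ invRev [(x, !e)]) =
      mk (alternatingWord y x e m) := by
  have hinv : mk [(x, !e)] = (mk [(x, e)])⁻¹ := by simp [inv_mk, invRev]
  rw [← mul_mk, ← mul_mk, ← inv_mk, hinv, mk_alternatingWord, mk_alternatingWord, mk_pair, mk_pair]
  simpa only [inv_inv, mul_assoc, inv_mul_cancel_left] using
    (conj_pow (a := (mk [(x, e)])⁻¹) (b := mk [(x, e)] * mk [(y, e)]) (i := m)).symm

theorem mk_last_conj_alternatingWord (x y : α) (e : Bool) (m : ℕ) :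
    mk ([(y, e)] ++ alternatingWord x y e m ++ invRev [(y, e)]) = mk (alternatingWord y x e m) := by
  rw [← mul_mk, ← mul_mk, ← inv_mk, mk_alternatingWord, mk_alternatingWord, mk_pair, mk_pair]
  simpa only [mul_assoc, mul_inv_cancel, mul_one] using
    (conj_pow (a := mk [(y, e)]) (b := mk [(x, e)] * mk [(y, e)]) (i := m)).symm

theorem exists_alternatingWord_infix_toWord_conj_pow [DecidableEq α] {x y : α} (hxy : x ≠ y)
    (e : Bool) {m : ℕ} (hm : 2 ≤ m) (g : FreeGroup α) :
    ∃ x' y', x' ≠ y' ∧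
      alternatingWord x' y' e 2 <:+: (g * mk [(x, e), (y, e)] ^ m * g⁻¹).toWord := by
  let S (w : List (α × Bool)) : Prop := ∃ x y, x ≠ y ∧ w = alternatingWord x y e m
  have hS : ∀ w, S w → IsReduced w := by
    rintro _ ⟨x, y, -, rfl⟩
    exact isReduced_alternatingWord x y e m
  have hconj : ∀ w ℓ, S w → IsReduced ([ℓ] ++ w ++ invRev [ℓ]) ∨
      ∃ w', S w' ∧ mk ([ℓ] ++ w ++ invRev [ℓ]) = mk w' := by
    rintro _ ℓ ⟨x, y, hxy, rfl⟩
    by_cases hx : ℓ = (x, !e)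
    · exact Or.inr ⟨_, ⟨y, x, hxy.symm, rfl⟩, hx ▸ mk_inv_head_conj_alternatingWord x y e m⟩
    by_cases hy : ℓ = (y, e)
    · exact Or.inr ⟨_, ⟨y, x, hxy.symm, rfl⟩, hy ▸ mk_last_conj_alternatingWord x y e m⟩
    exact Or.inl (isReduced_letter_alternatingWord_invRev (by omega) hx hy)
  rw [← mk_alternatingWord]
  obtain ⟨_, ⟨x', y', hne, rfl⟩, hinfix⟩ :=
    exists_infix_toWord_conj_of_forall_letter hS hconj g ⟨x, y, hxy, rfl⟩
  exact ⟨x', y', hne, (alternatingWord_infix_of_le x' y' e hm).trans hinfix⟩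

theorem alternatingWord_infix_toWord_conj_pow_bool (s e : Bool) {m : ℕ} (hm : 2 ≤ m)
    (g : FreeGroup Bool) :
    alternatingWord false true e 2 <:+: (g * mk [(s, e), (!s, e)] ^ m * g⁻¹).toWord ∨
      alternatingWord true false e 2 <:+: (g * mk [(s, e), (!s, e)] ^ m * g⁻¹).toWord := by
  obtain ⟨x', y', hne, h⟩ :=
    exists_alternatingWord_infix_toWord_conj_pow (Bool.self_ne_not s) e hm g
  cases x' <;> cases y' <;> tauto

end FreeGroup

theorem conj_pow_contains_string_general (n : ℤ) (x : FreeGroup Bool) :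
    (2 ≤ n →
      strABAB <:+: (x * (a * b) ^ n * x⁻¹).toWord ∨
      strBABA <:+: (x * (a * b) ^ n * x⁻¹).toWord) ∧
    (n ≤ -2 →
      strBiAiBiAi <:+: (x * (a * b) ^ n * x⁻¹).toWord ∨
      strAiBiAiBi <:+: (x * (a * b) ^ n * x⁻¹).toWord) := by
  have hab : a * b = FreeGroup.mk [(false, true), (true, true)] := rfl
  refine ⟨fun hn => ?_, fun hn => ?_⟩
  · lift n to ℕ using by omega
    rw [zpow_natCast, hab]
    exact FreeGroup.alternatingWord_infix_toWord_conj_pow_bool false true (by omega) x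
  · obtain ⟨m, rfl⟩ : ∃ m : ℕ, n = -m := ⟨n.natAbs, by omega⟩
    have hba : (a * b)⁻¹ = FreeGroup.mk [(true, false), (false, false)] := by
      rw [hab, FreeGroup.inv_mk]
      rfl
    rw [zpow_neg, zpow_natCast, ← inv_pow, hba]
    exact (FreeGroup.alternatingWord_infix_toWord_conj_pow_bool true false (by omega) x).symm

/-- For `|n| ≥ 2`, the reduced word of `x * (a*b)^n * x⁻¹` contains `abab` or `baba`
as a contiguous substring when `n ≥ 2`, and contains `b⁻¹a⁻¹b⁻¹a⁻¹` or `a⁻¹b⁻¹a⁻¹b⁻¹`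
when `n ≤ -2`. -/
theorem conj_pow_contains_string (n : ℤ) (hn : 2 ≤ |n|) (x : FreeGroup Bool) :
    (2 ≤ n →
      strABAB <:+: (x * (a * b) ^ n * x⁻¹).toWord ∨
      strBABA <:+: (x * (a * b) ^ n * x⁻¹).toWord) ∧
    (n ≤ -2 →
      strBiAiBiAi <:+: (x * (a * b) ^ n * x⁻¹).toWord ∨
      strAiBiAiBi <:+: (x * (a * b) ^ n * x⁻¹).toWord) :=
  conj_pow_contains_string_general n x
end

section
/- For every integer n with |n| ≥ 2 and every x in the free group F(a,b), the reduced word representing x*(a*b)^n*x⁻¹ contains some occurrence of the letter b (or b⁻¹) immediately preceded and followed by a letter a^{±1}, and some occurrence of the letter a (or a⁻¹) immediately preceded and followed by a letter b^{±1}. -/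
open FreeGroup List

namespace ConjAux

abbrev Ltr := Bool × Bool

def Rr (p q : Ltr) : Prop := ¬(p.1 = q.1 ∧ p.2 = !q.2)

def isRed (L : List Ltr) : Prop := List.Chain' Rr L

def alt (P Q : Ltr) : ℕ → List Ltr
  | 0 => []
  | k+1 => P :: Q :: alt P Q k

lemma alt_succ (P Q : Ltr) (k : ℕ) : alt P Q (k+1) = P :: Q :: alt P Q k := rfl

lemma alt_succ_append (P Q : Ltr) (k : ℕ) : alt P Q (k+1) = alt P Q k ++ [P, Q] := by
  induction k with
  | zero => rfl
  | succ k ih =>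
      show P :: Q :: alt P Q (k+1) = (P :: Q :: alt P Q k) ++ [P, Q]
      simp [ih]

lemma alt_rot (P Q : Ltr) (k : ℕ) : alt P Q k ++ [P] = P :: alt Q P k := by
  induction k with
  | zero => rfl
  | succ k ih => rw [alt_succ, alt_succ]; simp [ih]

lemma invRev_cons (x : Ltr) (L : List Ltr) :
    invRev (x :: L) = invRev L ++ [(x.1, !x.2)] := by
  simp [invRev]

lemma invRev_singleton (x : Ltr) : invRev [x] = [(x.1, !x.2)] := by simp [invRev]

lemma invRev_append (L₁ L₂ : List Ltr) :
    invRev (L₁ ++ L₂) = invRev L₂ ++ invRev L₁ := by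
  simp [invRev]

lemma invRev_alt (P Q : Ltr) (k : ℕ) :
    invRev (alt P Q k) = alt (Q.1, !Q.2) (P.1, !P.2) k := by
  induction k with
  | zero => simp [alt, invRev]
  | succ k ih =>
      rw [alt_succ, invRev_cons, invRev_cons, ih, alt_succ_append]
      simp

lemma isRed_alt' {P Q : Ltr} (h : P.1 = !Q.1) :
    ∀ k, isRed (alt P Q k) ∧ isRed (Q :: alt P Q k)
  | 0 => ⟨List.isChain_nil, List.isChain_singleton _⟩
  | (k+1) => by
      obtain ⟨h1, h2⟩ := isRed_alt' h k
      have hPQ : Rr P Q := by rintro ⟨c, -⟩; rw [h] at c; simp at c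
      have hQP : Rr Q P := by rintro ⟨c, -⟩; rw [h] at c; simp at c
      have first : isRed (alt P Q (k+1)) := List.isChain_cons_cons.2 ⟨hPQ, h2⟩
      exact ⟨first, List.isChain_cons_cons.2 ⟨hQP, first⟩⟩

lemma isRed_alt {P Q : Ltr} (h : P.1 = !Q.1) (k : ℕ) : isRed (alt P Q k) :=
  (isRed_alt' h k).1

lemma head?_alt (P Q : Ltr) (k : ℕ) : (alt P Q (k+1)).head? = some P := rfl

lemma getLast?_alt (P Q : Ltr) (k : ℕ) : (alt P Q (k+1)).getLast? = some Q := by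
  rw [alt_succ_append, show alt P Q k ++ [P, Q] = (alt P Q k ++ [P]) ++ [Q] by simp,
    List.getLast?_concat]

lemma reduce_eq_self {L : List Ltr} (h : isRed L) : FreeGroup.reduce L = L := by
  induction L with
  | nil => rfl
  | cons x L ih =>
      rw [FreeGroup.reduce.cons, ih h.tail]
      cases L with
      | nil => rfl
      | cons hd tl =>
          have hR : Rr x hd := (List.isChain_cons_cons.1 h).1
          simp only [Rr] at hR
          simp [if_neg hR]

lemma isRed_of_reduce {L : List Ltr} (h : FreeGroup.reduce L = L) : isRed L := by
  induction L with
  | nil => exact List.isChain_nil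
  | cons x L ih =>
      rw [FreeGroup.reduce.cons] at h
      rcases hr : FreeGroup.reduce L with - | ⟨hd, tl⟩
      · rw [hr] at h
        simp only at h
        have : L = [] := by simpa using congrArg List.tail h.symm
        subst this; exact List.isChain_singleton _
      · rw [hr] at h
        simp only at h
        by_cases hc : x.1 = hd.1 ∧ x.2 = !hd.2
        · rw [if_pos hc] at h
          have h1 : tl.length = L.length + 1 := by rw [h]; simp
          have h2 : (FreeGroup.reduce L).length ≤ L.length :=
            FreeGroup.Red.length_le FreeGroup.reduce.red
          rw [hr] at h2; simp at h2; omega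
        · rw [if_neg hc] at h
          have hL : L = hd :: tl := (by simpa using congrArg List.tail h : hd :: tl = L).symm
          subst hL
          exact List.isChain_cons_cons.2 ⟨hc, ih hr⟩

lemma toWord_eq {L : List Ltr} (h : isRed L) : (FreeGroup.mk L).toWord = L :=
  (FreeGroup.toWord_mk).trans (reduce_eq_self h)

lemma inv_single (ℓ : Ltr) : (FreeGroup.mk [ℓ])⁻¹ = FreeGroup.mk [(ℓ.1, !ℓ.2)] := by
  rw [FreeGroup.inv_mk, invRev_singleton]


lemma Rr_iff (p q : Ltr) : Rr p q ↔ q ≠ (p.1, !p.2) := by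
  rcases p with ⟨p1, p2⟩; rcases q with ⟨q1, q2⟩
  simp [Rr, Prod.ext_iff]
  cases p2 <;> cases q2 <;> simp <;> tauto

lemma inv_inv_ltr (p : Ltr) : ((p.1, !p.2).1, !(p.1, !p.2).2) = p := by
  cases p; simp

lemma inv_ltr_inj {p q : Ltr} (h : (p.1, !p.2) = (q.1, !q.2)) : p = q := by
  rcases p with ⟨p1, p2⟩; rcases q with ⟨q1, q2⟩
  simp [Prod.ext_iff] at h ⊢
  cases p2 <;> cases q2 <;> simp_all

def Decomp (k : ℕ) (g : FreeGroup Bool) : Prop :=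
  ∃ u P Q, P.1 = !Q.1 ∧
    g = FreeGroup.mk (u ++ alt P Q k ++ invRev u) ∧
    isRed (u ++ alt P Q k ++ invRev u)

lemma isRed_wrap {W : List Ltr} {x y w1 wl : Ltr} (hW : isRed W)
    (hhead : W.head? = some w1) (hlast : W.getLast? = some wl)
    (h1 : Rr x w1) (h2 : Rr wl y) : isRed (x :: (W ++ [y])) := by
  refine List.isChain_cons.2 ⟨?_, ?_⟩
  · intro z hz
    rcases W with - | ⟨w, W'⟩
    · simp at hhead
    · simp at hhead hz
      subst hz
      rw [hhead]; exact h1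
  · refine (List.isChain_append).2 ⟨hW, List.isChain_singleton _, ?_⟩
    intro p hp q hq
    simp at hq
    rw [hlast] at hp
    simp at hp
    subst hp; subst hq; exact h2

lemma step {k : ℕ} {g : FreeGroup Bool} (hg : Decomp (k+1) g) (ℓ : Ltr) :
    Decomp (k+1) (FreeGroup.mk [ℓ] * g * (FreeGroup.mk [ℓ])⁻¹) := by
  obtain ⟨u, P, Q, hPQ, hgeq, hred⟩ := hg
  have hQP : Q.1 = !P.1 := by rw [hPQ]; simp
  rcases u with - | ⟨ℓ', u'⟩
  · simp only [List.nil_append, invRev_empty, List.append_nil] at hgeq hred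
    by_cases hc1 : ℓ = (P.1, !P.2)
    · -- cancels with head P
      refine ⟨[], Q, P, hQP, ?_, ?_⟩
      · simp only [List.nil_append, invRev_empty, List.append_nil]
        subst hc1
        have h1 : FreeGroup.mk [(P.1, !P.2)] = (FreeGroup.mk [P])⁻¹ := (inv_single P).symm
        have h2 : ((FreeGroup.mk [P])⁻¹)⁻¹ = FreeGroup.mk [P] := inv_inv _
        rw [hgeq, h1, h2]
        have e1 : alt P Q (k+1) = [P] ++ (Q :: alt P Q k) := rfl
        have e2 : alt Q P (k+1) = (Q :: alt P Q k) ++ [P] := by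
          rw [List.cons_append, alt_rot]; rfl
        rw [e1, e2, ← mul_mk, ← mul_mk]
        group
      · simp only [List.nil_append, invRev_empty, List.append_nil]
        exact isRed_alt hQP _
    · by_cases hc2 : ℓ = Q
      · -- ℓ⁻¹ cancels with last Q
        refine ⟨[], Q, P, hQP, ?_, ?_⟩
        · simp only [List.nil_append, invRev_empty, List.append_nil]
          subst hc2
          rw [hgeq]
          have e1 : alt P ℓ (k+1) = (alt P ℓ k ++ [P]) ++ [ℓ] := by
            rw [alt_succ_append]; simp
          have e2 : alt ℓ P (k+1) = [ℓ] ++ (alt P ℓ k ++ [P]) := by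
            rw [alt_rot]; rfl
          rw [e1, e2, ← mul_mk, ← mul_mk]
          group
          simp [mul_mk]
        · simp only [List.nil_append, invRev_empty, List.append_nil]
          exact isRed_alt hQP _
      · -- no cancellation
        refine ⟨[ℓ], P, Q, hPQ, ?_, ?_⟩
        · rw [hgeq, inv_single, invRev_singleton]
          simp [mul_mk]
        · rw [invRev_singleton]
          have : ([ℓ] ++ alt P Q (k+1) ++ [(ℓ.1, !ℓ.2)]) = ℓ :: (alt P Q (k+1) ++ [(ℓ.1, !ℓ.2)]) := by simp
          rw [this]
          refine isRed_wrap (isRed_alt hPQ _) (head?_alt P Q k) (getLast?_alt P Q k) ?_ ?_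
          · rw [Rr_iff]
            intro hPe
            exact hc1 (by rw [hPe]; exact (inv_inv_ltr ℓ).symm)
          · rw [Rr_iff]
            intro hQe
            exact hc2 (inv_ltr_inj hQe)
  · -- u = ℓ' :: u'
    have hWold : (ℓ' :: u') ++ alt P Q (k+1) ++ invRev (ℓ' :: u')
        = ℓ' :: ((u' ++ alt P Q (k+1) ++ invRev u') ++ [(ℓ'.1, !ℓ'.2)]) := by
      rw [invRev_cons]; simp
    by_cases hc : ℓ' = (ℓ.1, !ℓ.2)
    · -- cancellation on both sides
      refine ⟨u', P, Q, hPQ, ?_, ?_⟩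
      · rw [hgeq, hWold]
        have h2 : (ℓ'.1, !ℓ'.2) = ℓ := by
          rcases ℓ with ⟨l1, l2⟩; rw [hc]; simp
        rw [h2]
        have : (ℓ' :: ((u' ++ alt P Q (k+1) ++ invRev u') ++ [ℓ]))
            = [ℓ'] ++ (u' ++ alt P Q (k+1) ++ invRev u') ++ [ℓ] := by simp
        rw [this, ← mul_mk, ← mul_mk]
        have h3 : FreeGroup.mk [ℓ'] = (FreeGroup.mk [ℓ])⁻¹ := by rw [hc, ← inv_single]
        rw [h3]
        group
      · apply hred.infix
        rw [hWold]
        exact ⟨[ℓ'], [(ℓ'.1, !ℓ'.2)], by simp⟩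
    · -- no cancellation
      refine ⟨ℓ :: ℓ' :: u', P, Q, hPQ, ?_, ?_⟩
      · rw [hgeq, inv_single]
        simp [mul_mk, invRev_cons]
      · have harr : (ℓ :: ℓ' :: u') ++ alt P Q (k+1) ++ invRev (ℓ :: ℓ' :: u')
            = ℓ :: (((ℓ' :: u') ++ alt P Q (k+1) ++ invRev (ℓ' :: u')) ++ [(ℓ.1, !ℓ.2)]) := by
          rw [invRev_cons ℓ]; simp
        rw [harr]
        refine isRed_wrap (w1 := ℓ') (wl := (ℓ'.1, !ℓ'.2)) hred ?_ ?_ ?_ ?_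
        · simp
        · rw [hWold, show ℓ' :: ((u' ++ alt P Q (k+1) ++ invRev u') ++ [(ℓ'.1, !ℓ'.2)])
              = (ℓ' :: (u' ++ alt P Q (k+1) ++ invRev u')) ++ [(ℓ'.1, !ℓ'.2)] by simp,
            List.getLast?_concat]
        · rw [Rr_iff]; exact hc
        · rw [Rr_iff, inv_inv_ltr]
          exact fun h => hc h.symm

lemma conj_decomp {k : ℕ} {c : FreeGroup Bool} (hc : Decomp (k+1) c) :
    ∀ w : List Ltr, isRed w → Decomp (k+1) (FreeGroup.mk w * c * (FreeGroup.mk w)⁻¹) := by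
  intro w
  induction w with
  | nil =>
      intro _
      have e : FreeGroup.mk ([] : List Ltr) * c * (FreeGroup.mk ([] : List Ltr))⁻¹ = c := by
        rw [← FreeGroup.one_eq_mk]; group
      rw [e]; exact hc
  | cons ℓ w' ih =>
      intro hw
      have e : FreeGroup.mk (ℓ :: w') * c * (FreeGroup.mk (ℓ :: w'))⁻¹
          = FreeGroup.mk [ℓ] * (FreeGroup.mk w' * c * (FreeGroup.mk w')⁻¹) * (FreeGroup.mk [ℓ])⁻¹ := by
        rw [show FreeGroup.mk (ℓ :: w') = FreeGroup.mk [ℓ] * FreeGroup.mk w' by rw [mul_mk]; rfl]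
        group
      rw [e]
      exact step (ih hw.tail) ℓ

end ConjAux


namespace ConjAux

lemma ab_pow (m : ℕ) : (a * b) ^ m = FreeGroup.mk (alt (false, true) (true, true) m) := by
  induction m with
  | zero => simp [alt, FreeGroup.one_eq_mk]
  | succ m ih =>
      rw [pow_succ, ih, show a * b = FreeGroup.mk [((false:Bool), true), ((true:Bool), true)] from rfl,
        mul_mk, alt_succ_append]

lemma base (n : ℤ) : ∃ P Q : Ltr, P.1 = !Q.1 ∧ (a * b) ^ n = FreeGroup.mk (alt P Q n.natAbs) := by
  rcases le_or_gt 0 n with h | h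
  · refine ⟨(false, true), (true, true), rfl, ?_⟩
    conv_lhs => rw [show n = (n.natAbs : ℤ) by omega]
    rw [zpow_natCast, ab_pow]
  · refine ⟨(true, false), (false, false), rfl, ?_⟩
    conv_lhs => rw [show n = -(n.natAbs : ℤ) by omega]
    rw [zpow_neg, zpow_natCast, ab_pow, FreeGroup.inv_mk, invRev_alt]
    norm_num

lemma decomp_ab_pow (n : ℤ) (hn : 2 ≤ |n|) (x : FreeGroup Bool) :
    Decomp n.natAbs (x * (a * b) ^ n * x⁻¹) := by
  obtain ⟨P, Q, hPQ, hab⟩ := base n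
  have habs : 2 ≤ n.natAbs := by have := Int.abs_eq_natAbs n; omega
  have hk : ∃ m, n.natAbs = m + 1 := ⟨n.natAbs - 1, by omega⟩
  obtain ⟨m, hm⟩ := hk
  rw [hm] at hab ⊢
  have hbase : Decomp (m+1) ((a * b) ^ n) :=
    ⟨[], P, Q, hPQ, by simpa using hab, by simpa using isRed_alt hPQ (m+1)⟩
  have hx : x = FreeGroup.mk x.toWord := FreeGroup.mk_toWord.symm
  rw [hx]
  exact conj_decomp hbase x.toWord (isRed_of_reduce (FreeGroup.reduce_toWord x))

end ConjAux

open ConjAux in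
/-- For `|n| ≥ 2`, the reduced word of `x * (a*b)^n * x⁻¹` contains some letter
`b^{±1}` immediately preceded and followed by letters `a^{±1}`, and some letter
`a^{±1}` immediately preceded and followed by letters `b^{±1}`.
(Letters are pairs: `(false, ε)` is `a^{±1}`, `(true, ε)` is `b^{±1}`.) -/
theorem conj_pow_has_flanked_letters (n : ℤ) (hn : 2 ≤ |n|) (x : FreeGroup Bool) :
    (∃ ε₁ ε₂ ε₃ : Bool,
      [(false, ε₁), (true, ε₂), (false, ε₃)] <:+: (x * (a * b) ^ n * x⁻¹).toWord) ∧
    (∃ ε₁ ε₂ ε₃ : Bool,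
      [(true, ε₁), (false, ε₂), (true, ε₃)] <:+: (x * (a * b) ^ n * x⁻¹).toWord) := by
  obtain ⟨u, P, Q, hPQ, heq, hred⟩ := decomp_ab_pow n hn x
  have hW : (x * (a * b) ^ n * x⁻¹).toWord = u ++ alt P Q n.natAbs ++ invRev u := by
    rw [heq, toWord_eq hred]
  have habs : 2 ≤ n.natAbs := by have := Int.abs_eq_natAbs n; omega
  obtain ⟨m, hm⟩ : ∃ m, n.natAbs = m + 2 := ⟨n.natAbs - 2, by omega⟩
  rw [hm] at hW
  have halt : alt P Q (m+2) = P :: Q :: P :: Q :: alt P Q m := rfl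
  have inf1 : [P, Q, P] <:+: (x * (a * b) ^ n * x⁻¹).toWord := by
    rw [hW, halt]
    exact ⟨u, Q :: alt P Q m ++ invRev u, by simp⟩
  have inf2 : [Q, P, Q] <:+: (x * (a * b) ^ n * x⁻¹).toWord := by
    rw [hW, halt]
    exact ⟨u ++ [P], alt P Q m ++ invRev u, by simp⟩
  rcases P with ⟨p1, p2⟩
  rcases Q with ⟨q1, q2⟩
  simp only at hPQ
  cases q1 with
  | true =>
      have hp : p1 = false := by simpa using hPQ
      subst hp
      exact ⟨⟨p2, q2, p2, inf1⟩, ⟨q2, p2, q2, inf2⟩⟩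
  | false =>
      have hp : p1 = true := by simpa using hPQ
      subst hp
      exact ⟨⟨q2, p2, q2, inf2⟩, ⟨p2, q2, p2, inf1⟩⟩
end

section
/- Let u ≥ 2 and v ≥ 2 be integers and let H be the subgroup of the free group F(a,b) generated by a^u and a*b^v. Then in the reduced word of any element of H, every maximal block of consecutive letters b^{±1} has length a multiple of v; in particular no element of H has a reduced word containing a single letter b^{±1} with letters a^{±1} on both sides. -/
namespace FreeGroup

variable {α : Type*} (m : α → ℕ)

def stretch (w : List (α × Bool)) : List (α × Bool) :=
  w.flatMap fun p => List.replicate (m p.1) p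

def stretchHom : FreeGroup α →* FreeGroup α :=
  lift fun x => of x ^ m x

variable {m}

@[simp]
theorem stretch_nil : stretch m [] = [] := rfl

@[simp]
theorem stretch_cons (p : α × Bool) (w : List (α × Bool)) :
    stretch m (p :: w) = List.replicate (m p.1) p ++ stretch m w := rfl

theorem stretch_reverse (w : List (α × Bool)) : stretch m w.reverse = (stretch m w).reverse := by
  simp [stretch, List.flatMap_reverse, Function.comp_def]

theorem isReduced_stretch (hm : ∀ x, m x ≠ 0) {w : List (α × Bool)} (hw : IsReduced w) :
    IsReduced (stretch m w) := by
  rw [IsReduced, stretch, List.flatMap_def, List.isChain_flatten (by simp [hm])]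
  refine ⟨?_, (List.isChain_map _).2 (hw.imp ?_)⟩
  · simp only [List.mem_map]
    rintro _ ⟨p, -, rfl⟩
    exact List.isChain_replicate_of_rel _ fun _ => rfl
  · intro p q hpq
    simpa [List.getLast?_replicate, List.head?_replicate, hm] using hpq

theorem stretchHom_mk (w : List (α × Bool)) : stretchHom m (mk w) = mk (stretch m w) := by
  induction w with
  | nil => simp [← one_eq_mk]
  | cons p w ih =>
    rw [show mk (p :: w) = mk [p] * mk w from (mul_mk (L₁ := [p])).symm, _root_.map_mul, ih,
      stretch_cons, ← mul_mk, ← List.flatten_replicate_singleton, ← pow_mk]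
    obtain ⟨x, _ | _⟩ := p <;> simp [stretchHom, of, inv_mk, invRev]

theorem toWord_stretchHom [DecidableEq α] (hm : ∀ x, m x ≠ 0) (g : FreeGroup α) :
    (stretchHom m g).toWord = stretch m g.toWord := by
  rw [← mk_toWord (x := g), stretchHom_mk, toWord_mk, toWord_mk, reduce_toWord,
    (isReduced_stretch hm isReduced_toWord).reduce_eq]

theorem exists_stretch_eq_append {w l r : List (α × Bool)} (h : stretch m w = l ++ r)
    (hr : ∀ p ∈ r.head?, m p.1 = 1) :
    ∃ w₁ w₂, w = w₁ ++ w₂ ∧ stretch m w₁ = l ∧ stretch m w₂ = r := by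
  rw [stretch, List.flatMap_def] at h
  rcases List.flatten_eq_append_iff.1 h with ⟨as, bs, hw, rfl, rfl⟩ |
    ⟨as, bs, c, cs, ds, hw, rfl, rfl⟩
  · obtain ⟨w₁, w₂, rfl, rfl, rfl⟩ := List.map_eq_append_iff.1 hw
    exact ⟨w₁, w₂, rfl, List.flatMap_def, List.flatMap_def⟩
  · -- the cut falls inside the image `replicate (m p.1) p` of a letter `p`, which has length 1
    obtain ⟨w₁, w₂, rfl, rfl, hw₂⟩ := List.map_eq_append_iff.1 hw
    obtain ⟨p, w₃, rfl, hp, rfl⟩ := List.map_eq_cons_iff.1 hw₂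
    obtain rfl : c = p := List.eq_of_mem_replicate (by rw [hp]; simp)
    have hc : m c.1 = 1 := hr c (by simp)
    rw [hc, List.replicate_one, eq_comm, List.append_eq_singleton_iff] at hp
    obtain ⟨rfl, rfl⟩ : bs = [] ∧ cs = [] := by simpa using hp
    exact ⟨w₁, c :: w₃, rfl, by simp [stretch, List.flatMap_def],
      by simp [stretch, hc, List.flatMap_def]⟩

theorem mem_stretch {w : List (α × Bool)} {p : α × Bool} (hp : p ∈ w) (hm : m p.1 ≠ 0) :
    p ∈ stretch m w :=
  List.mem_flatMap.2 ⟨p, hp, List.mem_replicate.2 ⟨hm, rfl⟩⟩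

theorem dvd_length_of_stretch_eq_append {n : ℕ} {w l₁ blk l₂ : List (α × Bool)}
    (h : stretch m w = l₁ ++ blk ++ l₂) (hblk : ∀ p ∈ blk, n ∣ m p.1)
    (h₁ : ∀ p ∈ l₁.getLast?, m p.1 = 1) (h₂ : ∀ p ∈ l₂.head?, m p.1 = 1) :
    n ∣ blk.length := by
  obtain ⟨w₁, -, -, hw₁, -⟩ := exists_stretch_eq_append h h₂
  have hrev : stretch m w₁.reverse = blk.reverse ++ l₁.reverse := by
    rw [stretch_reverse, hw₁, List.reverse_append]
  obtain ⟨w₂, -, -, hw₂, -⟩ := exists_stretch_eq_append hrev (by simpa using h₁)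
  rw [← List.length_reverse, ← hw₂, stretch, List.length_flatMap]
  refine List.dvd_sum ?_
  simp only [List.mem_map, List.length_replicate]
  rintro _ ⟨p, hp, rfl⟩
  by_cases hm : m p.1 = 0
  · simp [hm]
  · exact hblk p (List.mem_reverse.1 (hw₂ ▸ mem_stretch hp hm))

theorem dvd_length_of_toWord_stretchHom_eq_append {n : ℕ} (hn : n ≠ 0) {g : FreeGroup Bool}
    {l₁ blk l₂ : List (Bool × Bool)}
    (hw : (stretchHom (cond · n 1) g).toWord = l₁ ++ blk ++ l₂)
    (hblk : ∀ p ∈ blk, p.1 = true) (h₁ : ∀ p ∈ l₁.getLast?, p.1 = false)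
    (h₂ : ∀ p ∈ l₂.head?, p.1 = false) : n ∣ blk.length := by
  rw [toWord_stretchHom (by rintro (_ | _) <;> simp [hn])] at hw
  exact dvd_length_of_stretch_eq_append hw (fun p hp => by simp [hblk p hp])
    (fun p hp => by simp [h₁ p hp]) (fun p hp => by simp [h₂ p hp])

end FreeGroup

open FreeGroup in
theorem b_blocks_of_subgroup_general (u v : ℤ) (hv : 2 ≤ v)
    (g : FreeGroup Bool) (hg : g ∈ Subgroup.closure {a ^ u, a * b ^ v}) :
    (∀ l₁ blk l₂ : List (Bool × Bool),
      g.toWord = l₁ ++ blk ++ l₂ →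
      (∀ p ∈ blk, p.1 = true) →
      (∀ p ∈ l₁.getLast?, p.1 = false) →
      (∀ p ∈ l₂.head?, p.1 = false) →
      v ∣ (blk.length : ℤ)) ∧
    ¬ ∃ ε₁ ε₂ ε₃ : Bool,
      [(false, ε₁), (true, ε₂), (false, ε₃)] <:+: g.toWord := by
  lift v to ℕ using by omega
  have hv₀ : v ≠ 0 := by omega
  obtain ⟨h, rfl⟩ : g ∈ (stretchHom (cond · v 1)).range := by
    refine (Subgroup.closure_le _).2 ?_ hg
    rintro _ (rfl | rfl)
    · exact ⟨of false ^ u, by simp [stretchHom, a]⟩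
    · exact ⟨of false * of true, by simp [stretchHom, a, b]⟩
  refine ⟨fun l₁ blk l₂ hw hblk h₁ h₂ => Int.natCast_dvd_natCast.2 <|
    dvd_length_of_toWord_stretchHom_eq_append hv₀ hw hblk h₁ h₂, ?_⟩
  rintro ⟨ε₁, ε₂, ε₃, s, t, hst⟩
  have hw : (stretchHom (cond · v 1) h).toWord =
      s ++ [(false, ε₁)] ++ [(true, ε₂)] ++ (false, ε₃) :: t := by
    simp [← hst]
  have := Nat.le_of_dvd one_pos <|
    dvd_length_of_toWord_stretchHom_eq_append hv₀ hw (by simp) (by simp) (by simp)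
  omega

/-- For `u, v ≥ 2` and `H = ⟨a^u, a*b^v⟩ ≤ F(a,b)`: in the reduced word of any
element of `H`, every maximal block of consecutive `b^{±1}` letters has length a
multiple of `v`; in particular no element of `H` has a reduced word containing a
single `b^{±1}` letter flanked on both sides by `a^{±1}` letters.
(Letters are pairs: `(false, ε)` is `a^{±1}`, `(true, ε)` is `b^{±1}`; a block of
`b`-letters is maximal when the letter just before it and the letter just after it,
if any, are `a`-letters.) -/
theorem b_blocks_of_subgroup (u v : ℤ) (hu : 2 ≤ u) (hv : 2 ≤ v)
    (g : FreeGroup Bool) (hg : g ∈ Subgroup.closure {a ^ u, a * b ^ v}) :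
    (∀ l₁ blk l₂ : List (Bool × Bool),
      g.toWord = l₁ ++ blk ++ l₂ →
      (∀ p ∈ blk, p.1 = true) →
      (∀ p ∈ l₁.getLast?, p.1 = false) →
      (∀ p ∈ l₂.head?, p.1 = false) →
      v ∣ (blk.length : ℤ)) ∧
    ¬ ∃ ε₁ ε₂ ε₃ : Bool,
      [(false, ε₁), (true, ε₂), (false, ε₃)] <:+: g.toWord :=
  b_blocks_of_subgroup_general u v hv g hg
end

section
/- Let u ≥ 2 and v ≥ 2 be integers. For every integer n with |n| ≥ 2 and every x in the free group F(a,b), the element x*(a*b)^n*x⁻¹ does not lie in the subgroup of F(a,b) generated by {a^u, a*b^v}. -/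
/-!
Represent `F(a, b)` in `SL(2, ℝ)` by sending `a` to the transvection `!![1, t; 0, 1]` and `b` to
the rotation by `θ = π / v`. Then `b ^ v ↦ -1`, so both generators `a ^ u` and `a * b ^ v` land
in the group of matrices `±!![1, x; 0, 1]`, all of whose traces are `±2`. On the other hand
`a * b ↦` a matrix of trace `2 cos θ + t sin θ`, which exceeds `2` for `t = 5 / sin θ`. For
`g ∈ SL(2)` the traces `tₖ = tr gᵏ` satisfy `tₖ₊₂ = t₁ tₖ₊₁ - tₖ` with `t₀ = 2`, so `t₁ > 2`
forces `tₖ > 2` for every `k ≠ 0`; as the trace is a conjugation invariant, no conjugate of a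
nonzero power of `a * b` can lie in the subgroup.
-/

open Matrix MatrixGroups

namespace Matrix.SpecialLinearGroup

section CommRing

variable {n R : Type*} [Fintype n] [DecidableEq n] [CommRing R]

lemma trace_conj (g h : SpecialLinearGroup n R) :
    trace (g * h * g⁻¹ : SpecialLinearGroup n R).1 = trace h.1 := by
  rw [coe_mul, coe_mul, trace_mul_cycle, ← coe_mul, inv_mul_cancel, coe_one, Matrix.one_mul]

lemma trace_inv_fin_two (g : SL(2, R)) : trace (g⁻¹ : SL(2, R)).1 = trace g.1 := by
  rw [coe_inv, adjugate_fin_two, trace_fin_two, trace_fin_two]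
  simp [add_comm]

lemma coe_sq_fin_two (g : SL(2, R)) : (g ^ 2 : SL(2, R)).1 = trace g.1 • g.1 - 1 := by
  have hdet := g.det_coe
  rw [det_fin_two] at hdet
  ext i j
  fin_cases i <;> fin_cases j <;> simp [sq, mul_apply, trace_fin_two] <;>
    first | linear_combination -hdet | ring

lemma trace_pow_add_two (g : SL(2, R)) (k : ℕ) :
    trace (g ^ (k + 2) : SL(2, R)).1 =
      trace g.1 * trace (g ^ (k + 1) : SL(2, R)).1 - trace (g ^ k : SL(2, R)).1 := by
  rw [pow_add, coe_mul, coe_sq_fin_two, Matrix.mul_sub, Matrix.mul_smul, Matrix.mul_one,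
    trace_sub, trace_smul, ← coe_mul, ← pow_succ, smul_eq_mul]

-- the matrices `±!![1, x; 0, 1]`
def upperSignedUnipotent (R : Type*) [CommRing R] : Subgroup SL(2, R) where
  carrier := {g | g.1 1 0 = 0 ∧ g.1 0 0 = g.1 1 1}
  one_mem' := by simp
  mul_mem' := by
    rintro g h ⟨hg₁, hg₂⟩ ⟨hh₁, hh₂⟩
    simp [mul_apply, Fin.sum_univ_two, hg₁, hg₂, hh₁, hh₂]
  inv_mem' := by
    rintro g ⟨hg₁, hg₂⟩
    simp [coe_inv, adjugate_fin_two, hg₁, hg₂]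

lemma transvection_mem_upperSignedUnipotent (t : R) :
    transvection (zero_ne_one : (0 : Fin 2) ≠ 1) t ∈ upperSignedUnipotent R := by
  simp [upperSignedUnipotent, transvection_coe]

lemma neg_mem_upperSignedUnipotent {g : SL(2, R)} (hg : g ∈ upperSignedUnipotent R) :
    -g ∈ upperSignedUnipotent R := by
  obtain ⟨h₁, h₂⟩ := hg
  simp [upperSignedUnipotent, h₁, h₂]

end CommRing

section Ordered

variable {R : Type*} [CommRing R] [LinearOrder R] [IsStrictOrderedRing R]

lemma trace_le_two_of_mem_upperSignedUnipotent {g : SL(2, R)}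
    (hg : g ∈ upperSignedUnipotent R) : trace g.1 ≤ 2 := by
  obtain ⟨h₁, h₂⟩ := hg
  have hdet := g.det_coe
  rw [det_fin_two, h₁, ← h₂] at hdet
  rw [trace_fin_two, ← h₂]
  nlinarith [sq_nonneg (g.1 0 0 - 1)]

lemma two_lt_trace_pow {g : SL(2, R)} (hg : 2 < trace g.1) {k : ℕ} (hk : k ≠ 0) :
    2 < trace (g ^ k : SL(2, R)).1 := by
  have trace_strictMono : ∀ k : ℕ, trace (g ^ k : SL(2, R)).1 < trace (g ^ (k + 1) : SL(2, R)).1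
      ∧ 2 ≤ trace (g ^ k : SL(2, R)).1 := by
    intro k
    induction k with
    | zero => simp [hg]
    | succ k ih =>
      obtain ⟨hlt, hle⟩ := ih
      refine ⟨?_, hle.trans hlt.le⟩
      rw [trace_pow_add_two]
      nlinarith
  obtain ⟨m, rfl⟩ := Nat.exists_eq_succ_of_ne_zero hk
  exact (trace_strictMono m).2.trans_lt (trace_strictMono m).1

lemma two_lt_trace_zpow {g : SL(2, R)} (hg : 2 < trace g.1) {n : ℤ} (hn : n ≠ 0) :
    2 < trace (g ^ n : SL(2, R)).1 := by
  obtain ⟨k, rfl | rfl⟩ := n.eq_nat_or_neg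
  · exact_mod_cast two_lt_trace_pow hg (k := k) (by rintro rfl; simp at hn)
  · rw [_root_.zpow_neg, zpow_natCast, trace_inv_fin_two]
    exact two_lt_trace_pow hg (by rintro rfl; simp at hn)

end Ordered

noncomputable def rotation (θ : ℝ) : SL(2, ℝ) :=
  ⟨!![Real.cos θ, -Real.sin θ; Real.sin θ, Real.cos θ], by
    simp [det_fin_two_of, ← sq, Real.cos_sq_add_sin_sq]⟩

lemma rotation_add (θ φ : ℝ) : rotation (θ + φ) = rotation θ * rotation φ := by
  ext i j
  rw [coe_mul]
  fin_cases i <;> fin_cases j <;>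
    simp [rotation, mul_apply, Fin.sum_univ_two, Real.cos_add, Real.sin_add] <;> ring

lemma rotation_nsmul (k : ℕ) (θ : ℝ) : rotation (k • θ) = rotation θ ^ k := by
  induction k with
  | zero =>
    rw [zero_smul, pow_zero]
    ext i j
    fin_cases i <;> fin_cases j <;> simp [rotation]
  | succ k ih => rw [succ_nsmul, rotation_add, ih, pow_succ]

lemma rotation_pi : rotation Real.pi = -1 := by
  ext i j
  fin_cases i <;> fin_cases j <;> simp [rotation]

lemma trace_transvection_mul_rotation (t θ : ℝ) :
    trace (transvection (zero_ne_one : (0 : Fin 2) ≠ 1) t * rotation θ).1 =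
      2 * Real.cos θ + t * Real.sin θ := by
  rw [coe_mul, trace_fin_two]
  simp [transvection_coe, rotation, mul_apply, Fin.sum_univ_two]
  ring

end Matrix.SpecialLinearGroup

open Matrix.SpecialLinearGroup

theorem conj_zpow_not_mem_of_map_le_upperSignedUnipotent {R G : Type*} [CommRing R]
    [LinearOrder R] [IsStrictOrderedRing R] [Group G] {H : Subgroup G} (φ : G →* SL(2, R))
    (hH : H.map φ ≤ upperSignedUnipotent R) {g : G} (hg : 2 < trace (φ g).1) {n : ℤ}
    (hn : n ≠ 0) (x : G) : x * g ^ n * x⁻¹ ∉ H := by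
  intro hmem
  have hle := trace_le_two_of_mem_upperSignedUnipotent (hH (Subgroup.mem_map_of_mem φ hmem))
  rw [map_mul, map_mul, map_inv, map_zpow, SpecialLinearGroup.trace_conj] at hle
  exact (two_lt_trace_zpow hg hn).not_ge hle

theorem conj_pow_not_mem_general (u v : ℤ) (hv : 2 ≤ v)
    (n : ℤ) (hn : 2 ≤ |n|) (x : FreeGroup Bool) :
    x * (a * b) ^ n * x⁻¹ ∉ Subgroup.closure {a ^ u, a * b ^ v} := by
  set θ := Real.pi / v
  have hsin : 0 < Real.sin θ := Real.sin_pos_of_pos_of_lt_pi (by positivity)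
    (div_lt_self Real.pi_pos (by exact_mod_cast hv))
  set φ : FreeGroup Bool →* SL(2, ℝ) := FreeGroup.lift fun i ↦
    if i then rotation θ else transvection (zero_ne_one : (0 : Fin 2) ≠ 1) (5 / Real.sin θ)
  have hφa : φ a = transvection (zero_ne_one : (0 : Fin 2) ≠ 1) (5 / Real.sin θ) := by
    simp [φ, a]
  have hφb : φ b = rotation θ := by simp [φ, b]
  have hφbv : φ b ^ v = -1 := by
    lift v to ℕ using by omega
    have hvθ : (v : ℝ) * θ = Real.pi := mul_div_cancel₀ _ (by norm_cast; omega)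
    rw [hφb, zpow_natCast, ← rotation_nsmul, nsmul_eq_mul, hvθ, rotation_pi]
  refine conj_zpow_not_mem_of_map_le_upperSignedUnipotent φ ?_ ?_ (by rintro rfl; simp at hn) x
  · rw [MonoidHom.map_closure, Subgroup.closure_le]
    rintro - ⟨y, rfl | rfl, rfl⟩
    · rw [map_zpow, hφa]
      exact zpow_mem (transvection_mem_upperSignedUnipotent _) u
    · rw [map_mul, map_zpow, hφbv, mul_neg_one, hφa]
      exact neg_mem_upperSignedUnipotent (transvection_mem_upperSignedUnipotent _)
  · rw [map_mul, hφa, hφb, trace_transvection_mul_rotation, div_mul_cancel₀ _ hsin.ne']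
    linarith [Real.neg_one_le_cos θ]

/-- For `u, v ≥ 2` and `|n| ≥ 2`, no conjugate `x * (a*b)^n * x⁻¹` lies in the
subgroup of F(a,b) generated by `{a^u, a*b^v}`. -/
theorem conj_pow_not_mem (u v : ℤ) (hu : 2 ≤ u) (hv : 2 ≤ v)
    (n : ℤ) (hn : 2 ≤ |n|) (x : FreeGroup Bool) :
    x * (a * b) ^ n * x⁻¹ ∉ Subgroup.closure {a ^ u, a * b ^ v} :=
  conj_pow_not_mem_general u v hv n hn x
end

section
/- Let u ≥ 2, v ≥ 2 be integers and n a nonzero integer. If some conjugate of (a*b)^n in F(a,b) lies in the subgroup generated by {a^u, a*b^v} or in the subgroup generated by {b*a^u, b^v}, then this leads to a contradiction; i.e., no nonzero power of a*b is conjugate into either subgroup. -/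
open Monoid

/-- In a free product, a nonzero power of `of ξ * of η` (with `ξ, η` nontrivial elements of
distinct factors) is nontrivial. -/
theorem coprodI_mul_pow_ne_one {ι : Type*} [DecidableEq ι] {G : ι → Type*} [∀ i, Group (G i)]
    [∀ i, DecidableEq (G i)] {i j : ι} (hij : i ≠ j) {ξ : G i} {η : G j}
    (hξ : ξ ≠ 1) (hη : η ≠ 1) {N : ℤ} (hN : (CoprodI.of ξ * CoprodI.of η) ^ N = 1) : N = 0 := by
  have key : ∀ m : ℕ, ∃ w : CoprodI.NeWord G i j,
      w.prod = (CoprodI.of ξ * CoprodI.of η) ^ (m + 1) := by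
    intro m
    induction m with
    | zero => exact ⟨.append (.singleton ξ hξ) hij (.singleton η hη), by simp⟩
    | succ m ih =>
      obtain ⟨w, hw⟩ := ih
      refine ⟨.append (.append (.singleton ξ hξ) hij (.singleton η hη)) hij.symm w, ?_⟩
      rw [CoprodI.NeWord.append_prod, CoprodI.NeWord.append_prod,
        CoprodI.NeWord.prod_singleton, CoprodI.NeWord.prod_singleton, hw, ← pow_succ']
  have hnat : ∀ m : ℕ, (CoprodI.of ξ * CoprodI.of η) ^ (m + 1) ≠ 1 := by
    intro m hm
    obtain ⟨w, hw⟩ := key m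
    rw [hm] at hw
    have h2 : w.toWord = CoprodI.Word.empty := by
      have h3 : CoprodI.Word.equiv (M := G) w.toWord.prod = w.toWord :=
        (CoprodI.Word.equiv (M := G)).right_inv w.toWord
      have h4 : w.toWord.prod = 1 := hw
      rw [h4] at h3
      rw [← h3]
      show (1 : CoprodI G) • CoprodI.Word.empty = _
      rw [one_smul]
    exact w.toList_ne_nil (by rw [show w.toList = w.toWord.toList from rfl, h2]; rfl)
  rcases lt_trichotomy N 0 with h | h | h
  · exfalso
    apply hnat ((-N).toNat - 1)
    rw [show ((-N).toNat - 1 + 1 : ℕ) = (-N).toNat by omega, ← zpow_natCast,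
      Int.toNat_of_nonneg (by omega), zpow_neg, hN, inv_one]
  · exact h
  · exfalso
    apply hnat (N.toNat - 1)
    rw [show (N.toNat - 1 + 1 : ℕ) = N.toNat by omega, ← zpow_natCast,
      Int.toNat_of_nonneg (by omega), hN]

/-- The family of two cyclic groups `ℤ/p` (index `false`) and `ℤ/q` (index `true`),
written multiplicatively. -/
abbrev Fac (p q : ℕ) : Bool → Type := fun i => Multiplicative (ZMod (cond i q p))

/-- The canonical map from the free group on two generators to the free product
`ℤ/p * ℤ/q`, sending each generator to the generator of the corresponding factor. -/
noncomputable def φmap (p q : ℕ) : FreeGroup Bool →* CoprodI (Fac p q) :=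
  FreeGroup.lift (fun i =>
    CoprodI.of (M := Fac p q) (i := i) (Multiplicative.ofAdd (1 : ZMod (cond i q p))))

/-- For `u, v ≥ 2` and `n ≠ 0`, no conjugate of `(a*b)^n` lies in the subgroup
generated by `{a^u, a*b^v}` nor in the subgroup generated by `{b*a^u, b^v}`. -/
theorem conj_pow_not_mem_either (u v : ℤ) (hu : 2 ≤ u) (hv : 2 ≤ v)
    (n : ℤ) (hn : n ≠ 0) (x : FreeGroup Bool)
    (h : x * (a * b) ^ n * x⁻¹ ∈ Subgroup.closure {a ^ u, a * b ^ v} ∨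
         x * (a * b) ^ n * x⁻¹ ∈ Subgroup.closure {b * a ^ u, b ^ v}) :
    False := by
  classical
  set u' : ℕ := u.toNat with hu'def
  set v' : ℕ := v.toNat with hv'def
  have hu' : (u' : ℤ) = u := Int.toNat_of_nonneg (by omega)
  have hv' : (v' : ℤ) = v := Int.toNat_of_nonneg (by omega)
  haveI : Fact (1 < u') := ⟨by omega⟩
  haveI : Fact (1 < v') := ⟨by omega⟩
  set ξ : Fac u' v' false := Multiplicative.ofAdd (1 : ZMod u') with hξdef
  set η : Fac u' v' true := Multiplicative.ofAdd (1 : ZMod v') with hηdef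
  have hξ : ξ ≠ 1 := by simp [hξdef, ofAdd_eq_one]
  have hη : η ≠ 1 := by simp [hηdef, ofAdd_eq_one]
  set φ : FreeGroup Bool →* CoprodI (Fac u' v') := φmap u' v' with hφdef
  have hφa : φ a = CoprodI.of (M := Fac u' v') (i := false) ξ := FreeGroup.lift_apply_of
  have hφb : φ b = CoprodI.of (M := Fac u' v') (i := true) η := FreeGroup.lift_apply_of
  have hξu : ξ ^ u = 1 := by
    rw [← hu', zpow_natCast, ← ofAdd_nsmul]
    simp [ZMod.natCast_self]
  have hηv : η ^ v = 1 := by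
    rw [← hv', zpow_natCast, ← ofAdd_nsmul]
    simp [ZMod.natCast_self]
  have hφau : φ a ^ u = 1 := by rw [hφa, ← map_zpow, hξu, map_one]
  have hφbv : φ b ^ v = 1 := by rw [hφb, ← map_zpow, hηv, map_one]
  have core : ∀ (g : FreeGroup Bool) (c : ℤ), c ≠ 0 → φ g ^ c = 1 →
      φ (x * (a * b) ^ n * x⁻¹) ∈ Subgroup.zpowers (φ g) → False := by
    intro g c hc hgc hmem
    obtain ⟨k, hk⟩ := hmem
    have h1 : φ (x * (a * b) ^ n * x⁻¹) ^ c = 1 := by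
      rw [← hk, ← zpow_mul, mul_comm, zpow_mul, hgc, one_zpow]
    have h2 : (x * (a * b) ^ n * x⁻¹) ^ c = x * (a * b) ^ (n * c) * x⁻¹ := by
      rw [conj_zpow, ← zpow_mul]
    have h1' : φ ((x * (a * b) ^ n * x⁻¹) ^ c) = 1 := by rw [map_zpow]; exact h1
    rw [h2] at h1'
    replace h1 := h1'
    have h3 : φ ((a * b) ^ (n * c)) = 1 := by
      have := congrArg (fun t => (φ x)⁻¹ * t * φ x) h1
      simpa [map_mul, map_inv, mul_assoc] using this
    have h4 : (CoprodI.of (M := Fac u' v') ξ * CoprodI.of (M := Fac u' v') η) ^ (n * c) = 1 := by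
      rw [← hφa, ← hφb, ← map_mul, ← map_zpow]
      exact h3
    have := coprodI_mul_pow_ne_one (G := Fac u' v') (i := false) (j := true)
      (by simp) hξ hη h4
    exact hc (by simpa [hn] using mul_eq_zero.mp this)
  rcases h with h | h
  · have hle : Subgroup.closure {a ^ u, a * b ^ v} ≤ (Subgroup.zpowers (φ a)).comap φ := by
      rw [Subgroup.closure_le]
      rintro s (rfl | rfl)
      · simp only [Subgroup.mem_comap, SetLike.mem_coe, map_zpow, Subgroup.mem_zpowers_iff]
        exact ⟨0, by rw [zpow_zero]; exact hφau.symm⟩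
      · simp only [Subgroup.mem_comap, SetLike.mem_coe, map_mul, map_zpow]
        rw [hφbv, mul_one]
        exact Subgroup.mem_zpowers _
    exact core a u (by omega) hφau (hle h)
  · have hle : Subgroup.closure {b * a ^ u, b ^ v} ≤ (Subgroup.zpowers (φ b)).comap φ := by
      rw [Subgroup.closure_le]
      rintro s (rfl | rfl)
      · simp only [Subgroup.mem_comap, SetLike.mem_coe, map_mul, map_zpow]
        rw [hφau, mul_one]
        exact Subgroup.mem_zpowers _
      · simp only [Subgroup.mem_comap, SetLike.mem_coe, map_zpow, Subgroup.mem_zpowers_iff]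
        exact ⟨0, by rw [zpow_zero]; exact hφbv.symm⟩
    exact core b v (by omega) hφbv (hle h)
end
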